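/- Let P be a bivector field on M and φ a closed 1-form such that [P,P] = (♯_P φ) ∧ P (locally conformal Poisson condition). Then L_{½♯_P φ} P = 0; consequently (P, E) with E = ½ ♯_P φ is a Jacobi structure, i.e., [P,P] = 2E ∧ P and L_E P = 0. -/

import Mathlib

open scoped BigOperators

/- Coordinate model of multivector calculus on the manifold `M = ℝ^ι`:
vector fields, 1-forms, bivector and trivector fields are given by their
(smooth) components. -/

/-- Partial derivative `∂_l f`. -/
noncomputable def pd {ι : Type*} [Fintype ι] [DecidableEq ι] (l : ι)
    (f : (ι → ℝ) → ℝ) (x : ι → ℝ) : ℝ :=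
  fderiv ℝ f x (Pi.single l 1)

/-- `♯_P α`, defined by `β(♯_P α) = P(α,β)`; in components
`(♯_P α)^j = Σᵢ P^{ij} αᵢ`. -/
noncomputable def sharp {ι : Type*} [Fintype ι]
    (P : (ι → ℝ) → ι → ι → ℝ) (α : (ι → ℝ) → ι → ℝ) :
    (ι → ℝ) → ι → ℝ :=
  fun x j => ∑ i, P x i j * α x i

/-- Evaluation `P(α,β) = Σ P^{ij} αᵢ βⱼ` of a bivector field on two 1-forms. -/
noncomputable def evBV {ι : Type*} [Fintype ι]
    (P : (ι → ℝ) → ι → ι → ℝ) (α β : (ι → ℝ) → ι → ℝ) : (ι → ℝ) → ℝ :=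
  fun x => ∑ i, ∑ j, P x i j * α x i * β x j

/-- Evaluation `T(α,β,γ)` of a trivector field on three 1-forms. -/
noncomputable def evTV {ι : Type*} [Fintype ι]
    (T : (ι → ℝ) → ι → ι → ι → ℝ) (α β γ : (ι → ℝ) → ι → ℝ) : (ι → ℝ) → ℝ :=
  fun x => ∑ i, ∑ j, ∑ k, T x i j k * α x i * β x j * γ x k

/-- Lie bracket of vector fields. -/
noncomputable def vbr {ι : Type*} [Fintype ι] [DecidableEq ι]
    (X Y : (ι → ℝ) → ι → ℝ) : (ι → ℝ) → ι → ℝ :=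
  fun x i => ∑ l, (X x l * pd l (fun y => Y y i) x
    - Y x l * pd l (fun y => X y i) x)

/-- Lie derivative of a 1-form along a vector field:
`(L_X α)ᵢ = Σ_l (X^l ∂_l αᵢ + α_l ∂ᵢ X^l)`. -/
noncomputable def lieCov {ι : Type*} [Fintype ι] [DecidableEq ι]
    (X α : (ι → ℝ) → ι → ℝ) : (ι → ℝ) → ι → ℝ :=
  fun x i => ∑ l, (X x l * pd l (fun y => α y i) x
    + α x l * pd i (fun y => X y l) x)

/-- Lie derivative of a bivector field along a vector field:
`(L_X P)^{ij} = Σ_l (X^l ∂_l P^{ij} − P^{lj} ∂_l X^i − P^{il} ∂_l X^j)`. -/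
noncomputable def lieBV {ι : Type*} [Fintype ι] [DecidableEq ι]
    (X : (ι → ℝ) → ι → ℝ) (P : (ι → ℝ) → ι → ι → ℝ) :
    (ι → ℝ) → ι → ι → ℝ :=
  fun x i j => ∑ l, (X x l * pd l (fun y => P y i j) x
    - P x l j * pd l (fun y => X y i) x
    - P x i l * pd l (fun y => X y j) x)

/-- Schouten–Nijenhuis bracket `[P,P]` of a bivector field with itself:
`[P,P]^{ijk} = 2 Σ_l (P^{il} ∂_l P^{jk} + P^{jl} ∂_l P^{ki} + P^{kl} ∂_l P^{ij})`. -/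
noncomputable def schoutenPP {ι : Type*} [Fintype ι] [DecidableEq ι]
    (P : (ι → ℝ) → ι → ι → ℝ) : (ι → ℝ) → ι → ι → ι → ℝ :=
  fun x i j k => 2 * ∑ l, (P x i l * pd l (fun y => P y j k) x
    + P x j l * pd l (fun y => P y k i) x
    + P x k l * pd l (fun y => P y i j) x)

/-- Wedge `E ∧ P` of a vector field with a bivector field:
`(E∧P)^{ijk} = E^i P^{jk} + E^j P^{ki} + E^k P^{ij}`. -/
noncomputable def wedgeVP {ι : Type*} [Fintype ι]
    (E : (ι → ℝ) → ι → ℝ) (P : (ι → ℝ) → ι → ι → ℝ) :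
    (ι → ℝ) → ι → ι → ι → ℝ :=
  fun x i j k => E x i * P x j k + E x j * P x k i + E x k * P x i j

/-- `dα(X,Y) = Σ (∂ᵢ αⱼ − ∂ⱼ αᵢ) X^i Y^j`. -/
noncomputable def dOne {ι : Type*} [Fintype ι] [DecidableEq ι]
    (α X Y : (ι → ℝ) → ι → ℝ) : (ι → ℝ) → ℝ :=
  fun x => ∑ i, ∑ j, (pd i (fun y => α y j) x - pd j (fun y => α y i) x)
    * X x i * Y x j

/-- Pairing `γ(X) = Σ γ_k X^k` of a 1-form with a vector field. -/
noncomputable def pairCV {ι : Type*} [Fintype ι]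
    (γ X : (ι → ℝ) → ι → ℝ) : (ι → ℝ) → ℝ :=
  fun x => ∑ k, γ x k * X x k

/-- The bracket of 1-forms
`{α,β}_P = L_{♯_P α} β − L_{♯_P β} α − d(P(α,β))`. -/
noncomputable def formBr {ι : Type*} [Fintype ι] [DecidableEq ι]
    (P : (ι → ℝ) → ι → ι → ℝ) (α β : (ι → ℝ) → ι → ℝ) :
    (ι → ℝ) → ι → ℝ :=
  fun x i => lieCov (sharp P α) β x i - lieCov (sharp P β) α x i
    - pd i (evBV P α β) x

/-- Interior product `i(α∧β)T` of a trivector with a decomposable 2-form: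
`(i(α∧β)T)^k = Σ_{i,j} αᵢ βⱼ T^{ijk}`. -/
noncomputable def intTV {ι : Type*} [Fintype ι]
    (α β : (ι → ℝ) → ι → ℝ) (T : (ι → ℝ) → ι → ι → ι → ℝ) :
    (ι → ℝ) → ι → ℝ :=
  fun x k => ∑ i, ∑ j, α x i * β x j * T x i j k

section Helpers

variable {ι : Type*} [Fintype ι] [DecidableEq ι]

lemma pd_sum' (l : ι) (f : ι → (ι → ℝ) → ℝ) (x : ι → ℝ)
    (hf : ∀ i, DifferentiableAt ℝ (f i) x) :
    pd l (fun y => ∑ i, f i y) x = ∑ i, pd l (f i) x := by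
  unfold pd
  rw [fderiv_fun_sum fun i _ => hf i]
  simp

lemma pd_mul' (l : ι) (f g : (ι → ℝ) → ℝ) (x : ι → ℝ)
    (hf : DifferentiableAt ℝ f x) (hg : DifferentiableAt ℝ g x) :
    pd l (fun y => f y * g y) x = pd l f x * g x + f x * pd l g x := by
  unfold pd
  rw [fderiv_fun_mul hf hg]
  simp only [ContinuousLinearMap.add_apply, ContinuousLinearMap.smul_apply, smul_eq_mul]
  ring

lemma pd_const_mul' (l : ι) (c : ℝ) (f : (ι → ℝ) → ℝ) (x : ι → ℝ)
    (hf : DifferentiableAt ℝ f x) :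
    pd l (fun y => c * f y) x = c * pd l f x := by
  unfold pd
  rw [fderiv_const_mul hf]
  simp

lemma pd_neg' (l : ι) (f : (ι → ℝ) → ℝ) (x : ι → ℝ) :
    pd l (fun y => -f y) x = -pd l f x := by
  unfold pd
  rw [fderiv_fun_neg]
  simp

end Helpers

/-- If `P` is a bivector field and `φ` a closed 1-form with
`[P,P] = (♯_P φ) ∧ P`, then `L_{½♯_P φ} P = 0`; consequently `(P,E)` with
`E = ½ ♯_P φ` is a Jacobi structure: `[P,P] = 2E ∧ P` and `L_E P = 0`. -/
theorem stmt7 (ι : Type*) [Fintype ι] [DecidableEq ι]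
    (P : (ι → ℝ) → ι → ι → ℝ) (φ : (ι → ℝ) → ι → ℝ)
    (hPskew : ∀ x i j, P x i j = -P x j i)
    (hP : ∀ i j, ContDiff ℝ (⊤ : ℕ∞) fun x => P x i j)
    (hφ : ∀ i, ContDiff ℝ (⊤ : ℕ∞) fun x => φ x i)
    (hclosed : ∀ x i j, pd i (fun y => φ y j) x = pd j (fun y => φ y i) x)
    (hlcp : ∀ x i j k, schoutenPP P x i j k = wedgeVP (sharp P φ) P x i j k) :
    (∀ x i j, lieBV (fun y k => (1 / 2) * sharp P φ y k) P x i j = 0) ∧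
    (∀ x i j k, schoutenPP P x i j k =
      2 * wedgeVP (fun y k => (1 / 2) * sharp P φ y k) P x i j k) := by
  have hPd : ∀ i j x, DifferentiableAt ℝ (fun y => P y i j) x :=
    fun i j x => ((hP i j).differentiable (by simp)).differentiableAt
  have hφd : ∀ i x, DifferentiableAt ℝ (fun y => φ y i) x :=
    fun i x => ((hφ i).differentiable (by simp)).differentiableAt
  have hEd : ∀ i x, DifferentiableAt ℝ (fun y => sharp P φ y i) x := by
    intro i x
    simp only [sharp]
    exact DifferentiableAt.fun_sum fun m _ => (hPd m i x).mul (hφd m x)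
  -- derivative of the components of E = sharp P φ
  have hpdE : ∀ x l i, pd l (fun y => sharp P φ y i) x
      = ∑ m, (pd l (fun y => P y m i) x * φ x m
        + P x m i * pd l (fun y => φ y m) x) := by
    intro x l i
    have h1 : (fun y => sharp P φ y i) = fun y => ∑ m, P y m i * φ y m := rfl
    rw [h1, pd_sum' l _ x (fun m => (hPd m i x).fun_mul (hφd m x))]
    exact Finset.sum_congr rfl fun m _ => pd_mul' l _ _ x (hPd m i x) (hφd m x)
  -- skewness of derivatives of P
  have hQskew : ∀ x l i j, pd l (fun y => P y i j) x
      = - pd l (fun y => P y j i) x := by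
    intro x l i j
    have h1 : (fun y => P y i j) = fun y => -P y j i := funext fun y => hPskew y i j
    rw [h1, pd_neg']
  -- contraction of the wedge with φ vanishes
  have hcontr : ∀ x i j, ∑ m, φ x m * wedgeVP (sharp P φ) P x i j m = 0 := by
    intro x i j
    have hterm : ∀ m, φ x m * wedgeVP (sharp P φ) P x i j m
        = sharp P φ x i * (φ x m * P x j m) + sharp P φ x j * (φ x m * P x m i)
          + P x i j * (φ x m * sharp P φ x m) := by
      intro m; simp only [wedgeVP]; ring
    simp only [hterm, Finset.sum_add_distrib, ← Finset.mul_sum]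
    have hA : ∑ m, φ x m * P x j m = - sharp P φ x j := by
      simp only [sharp]
      rw [← Finset.sum_neg_distrib]
      exact Finset.sum_congr rfl fun m _ => by rw [hPskew x j m]; ring
    have hA' : ∑ m, φ x m * P x m i = sharp P φ x i := by
      simp only [sharp]
      exact Finset.sum_congr rfl fun m _ => by ring
    have hB : ∑ m, φ x m * sharp P φ x m = 0 := by
      have h2 : ∑ m, φ x m * sharp P φ x m
          = ∑ m, ∑ l, φ x m * (P x l m * φ x l) := by
        simp only [sharp, Finset.mul_sum]
      have h3 : ∑ m, ∑ l, φ x m * (P x l m * φ x l)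
          = - ∑ m, ∑ l, φ x m * (P x l m * φ x l) := by
        conv_lhs => rw [Finset.sum_comm]
        rw [← Finset.sum_neg_distrib]
        refine Finset.sum_congr rfl fun m _ => ?_
        rw [← Finset.sum_neg_distrib]
        refine Finset.sum_congr rfl fun l _ => ?_
        rw [hPskew x m l]; ring
      rw [h2]; linarith
    rw [hA, hA', hB]; ring
  -- the key computation: L_E P = 0 for E = sharp P φ
  have key : ∀ x i j, lieBV (sharp P φ) P x i j = 0 := by
    intro x i j
    have step1 : lieBV (sharp P φ) P x i j
        = ∑ l, ∑ m, (P x m l * φ x m * pd l (fun y => P y i j) x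
            - P x l j * (pd l (fun y => P y m i) x * φ x m
                + P x m i * pd l (fun y => φ y m) x)
            - P x i l * (pd l (fun y => P y m j) x * φ x m
                + P x m j * pd l (fun y => φ y m) x)) := by
      simp only [lieBV]
      refine Finset.sum_congr rfl fun l _ => ?_
      rw [hpdE x l i, hpdE x l j]
      simp only [sharp]
      rw [Finset.sum_mul, Finset.mul_sum, Finset.mul_sum,
        ← Finset.sum_sub_distrib, ← Finset.sum_sub_distrib]
    have split : ∑ l, ∑ m, (P x m l * φ x m * pd l (fun y => P y i j) x
            - P x l j * (pd l (fun y => P y m i) x * φ x m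
                + P x m i * pd l (fun y => φ y m) x)
            - P x i l * (pd l (fun y => P y m j) x * φ x m
                + P x m j * pd l (fun y => φ y m) x))
        = (∑ l, ∑ m, φ x m * (P x i l * pd l (fun y => P y j m) x
            + P x j l * pd l (fun y => P y m i) x
            + P x m l * pd l (fun y => P y i j) x))
          + (∑ l, ∑ m, (P x j l * P x m i * pd l (fun y => φ y m) x
            - P x i l * P x m j * pd l (fun y => φ y m) x)) := by
      rw [← Finset.sum_add_distrib]
      refine Finset.sum_congr rfl fun l _ => ?_
      rw [← Finset.sum_add_distrib]
      refine Finset.sum_congr rfl fun m _ => ?_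
      rw [hQskew x l m j, hPskew x l j]
      ring
    have hH : (∑ l, ∑ m, (P x j l * P x m i * pd l (fun y => φ y m) x
        - P x i l * P x m j * pd l (fun y => φ y m) x)) = 0 := by
      have hswap : ∑ l, ∑ m, P x i l * P x m j * pd l (fun y => φ y m) x
          = ∑ l, ∑ m, P x j l * P x m i * pd l (fun y => φ y m) x := by
        rw [Finset.sum_comm]
        refine Finset.sum_congr rfl fun l _ => ?_
        refine Finset.sum_congr rfl fun m _ => ?_
        rw [hclosed x m l, hPskew x i m, hPskew x l j]
        ring
      simp only [Finset.sum_sub_distrib]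
      rw [hswap, sub_self]
    have hF : (∑ l, ∑ m, φ x m * (P x i l * pd l (fun y => P y j m) x
        + P x j l * pd l (fun y => P y m i) x
        + P x m l * pd l (fun y => P y i j) x)) = 0 := by
      rw [Finset.sum_comm]
      have hterm : ∀ m, (∑ l, φ x m * (P x i l * pd l (fun y => P y j m) x
          + P x j l * pd l (fun y => P y m i) x
          + P x m l * pd l (fun y => P y i j) x))
          = (1 / 2) * (φ x m * schoutenPP P x i j m) := by
        intro m
        rw [← Finset.mul_sum]
        have hs : schoutenPP P x i j m
            = 2 * ∑ l, (P x i l * pd l (fun y => P y j m) x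
              + P x j l * pd l (fun y => P y m i) x
              + P x m l * pd l (fun y => P y i j) x) := rfl
        rw [hs]; ring
      simp only [hterm]
      have : ∑ m, (1 / 2 : ℝ) * (φ x m * schoutenPP P x i j m)
          = (1 / 2) * ∑ m, φ x m * wedgeVP (sharp P φ) P x i j m := by
        rw [Finset.mul_sum]
        exact Finset.sum_congr rfl fun m _ => by rw [hlcp x i j m]
      rw [this, hcontr x i j, mul_zero]
    rw [step1, split, hH, hF, add_zero]
  constructor
  · intro x i j
    have half : lieBV (fun y k => (1 / 2) * sharp P φ y k) P x i j
        = (1 / 2) * lieBV (sharp P φ) P x i j := by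
      simp only [lieBV, Finset.mul_sum]
      refine Finset.sum_congr rfl fun l _ => ?_
      rw [pd_const_mul' l (1 / 2) _ x (hEd i x), pd_const_mul' l (1 / 2) _ x (hEd j x)]
      ring
    rw [half, key, mul_zero]
  · intro x i j k
    rw [hlcp x i j k]
    simp only [wedgeVP]
    ring
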